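/- Collapses exist and are unique: (i) for every partition d of even size, the set of type-C partitions of the same size dominated by d has a greatest element with respect to the dominance order (the C-collapse of d); (ii) for every partition d of even size, the set of type-D partitions of the same size dominated by d has a greatest element (the D-collapse of d); (iii) for every partition d of odd size, the set of type-B partitions of the same size dominated by d has a greatest element (the B-collapse of d). -/
import Mathlib


/-!
Partitions (Young diagrams) are represented as antitone, eventually-zero
functions `f : ℕ → ℕ`, where `f i` is the length of the `(i+1)`-st row.
-/

/-- `f : ℕ → ℕ` represents a partition (Young diagram). -/
def IsPartition (f : ℕ → ℕ) : Prop :=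
  Antitone f ∧ ∃ N, ∀ i, N ≤ i → f i = 0

/-- The size of a partition: the sum of its parts. -/
noncomputable def size (f : ℕ → ℕ) : ℕ := ∑' i, f i

/-- The sum of the `k` largest parts of a partition. -/
def psum (f : ℕ → ℕ) (k : ℕ) : ℕ := ∑ i ∈ Finset.range k, f i

/-- The multiplicity with which `p` occurs as a part. -/
noncomputable def mult (f : ℕ → ℕ) (p : ℕ) : ℕ := {i | f i = p}.ncard

/-- The transpose (conjugate) partition: `transpose f i` is the length of the
`(i+1)`-st column of `f`. -/
noncomputable def transpose (f : ℕ → ℕ) : ℕ → ℕ := fun i => {j | i < f j}.ncard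

/-- The number of parts of a partition (the length of its first column). -/
noncomputable def numParts (f : ℕ → ℕ) : ℕ := {j | 0 < f j}.ncard

/-- Type B: odd size, and every (positive) even part occurs with even multiplicity. -/
def IsTypeB (f : ℕ → ℕ) : Prop :=
  IsPartition f ∧ Odd (size f) ∧ ∀ p, 0 < p → Even p → Even (mult f p)

/-- Type C: even size, and every odd part occurs with even multiplicity. -/
def IsTypeC (f : ℕ → ℕ) : Prop :=
  IsPartition f ∧ Even (size f) ∧ ∀ p, Odd p → Even (mult f p)

/-- Type D: even size, and every (positive) even part occurs with even multiplicity. -/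
def IsTypeD (f : ℕ → ℕ) : Prop :=
  IsPartition f ∧ Even (size f) ∧ ∀ p, 0 < p → Even p → Even (mult f p)

/-- Dominance order `f ≼ g` between partitions of the same size. -/
def Dom (f g : ℕ → ℕ) : Prop :=
  size f = size g ∧ ∀ k, psum f k ≤ psum g k

/-- `c` is the X-collapse of `d`, where predicate `T` expresses "type X": `c` is
the greatest type-X partition of the same size dominated by `d`. -/
def IsCollapse (T : (ℕ → ℕ) → Prop) (d c : ℕ → ℕ) : Prop :=
  T c ∧ Dom c d ∧ ∀ e, T e → Dom e d → Dom e c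

open Classical in
/-- The X-collapse of `d` (junk value if it does not exist). -/
noncomputable def collapse (T : (ℕ → ℕ) → Prop) (d : ℕ → ℕ) : ℕ → ℕ :=
  if h : ∃ c, IsCollapse T d c then h.choose else fun _ => 0

/-- The B-collapse. -/
noncomputable def collapseB : (ℕ → ℕ) → ℕ → ℕ := collapse IsTypeB

/-- The C-collapse. -/
noncomputable def collapseC : (ℕ → ℕ) → ℕ → ℕ := collapse IsTypeC

/-- The D-collapse. -/
noncomputable def collapseD : (ℕ → ℕ) → ℕ → ℕ := collapse IsTypeD

/-- `d⁺`: add one box to the first row. -/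
def boxPlus (f : ℕ → ℕ) : ℕ → ℕ := fun i => if i = 0 then f 0 + 1 else f i

/-- `d⁻`: remove one box from the last row (for nonempty `d`). -/
noncomputable def boxMinus (f : ℕ → ℕ) : ℕ → ℕ :=
  fun i => if i = numParts f - 1 then f i - 1 else f i

/-- `∇(d)`: remove the first column (every part decreased by 1). -/
def delCol (f : ℕ → ℕ) : ℕ → ℕ := fun i => f i - 1

/-- `∇̌(d)`: remove the first row (delete one largest part). -/
def delRow (f : ℕ → ℕ) : ℕ → ℕ := fun i => f (i + 1)

/-- The metaplectic Lusztig–Spaltenstein map: the D-collapse of the transpose. -/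
noncomputable def mLS (d : ℕ → ℕ) : ℕ → ℕ := collapseD (transpose d)

/-- The map `d̃_SP`: the C-collapse of `(e⁺)⁻`. -/
noncomputable def mSP (e : ℕ → ℕ) : ℕ → ℕ := collapseC (boxMinus (boxPlus e))

/-- The metaplectic Barbasch–Vogan duality. -/
noncomputable def mBV (d : ℕ → ℕ) : ℕ → ℕ := mSP (mLS d)


/-! ### Auxiliary machinery for the proof -/

lemma psum_succ' (f : ℕ → ℕ) (k : ℕ) : psum f (k+1) = psum f k + f k := Finset.sum_range_succ f k

lemma size_eq_psum' {f : ℕ → ℕ} {N : ℕ} (h : ∀ i, N ≤ i → f i = 0) : size f = psum f N := by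
  unfold size psum
  exact tsum_eq_sum (fun i hi => h i (Nat.le_of_not_lt (fun hc => hi (Finset.mem_range.2 hc))))

lemma psum_mono_k' (f : ℕ → ℕ) {k m : ℕ} (h : k ≤ m) : psum f k ≤ psum f m :=
  Finset.sum_le_sum_of_subset (Finset.range_subset_range.2 h)

lemma psum_le_size' {f : ℕ → ℕ} (hz : ∃ N, ∀ i, N ≤ i → f i = 0) (k : ℕ) : psum f k ≤ size f := by
  obtain ⟨N, hN⟩ := hz
  rw [size_eq_psum' (N := max N k) (fun i hi => hN i (le_trans (le_max_left _ _) hi))]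
  exact psum_mono_k' f (le_max_right _ _)

lemma block' {f : ℕ → ℕ} (hf : Antitone f) (hz : ∃ N, ∀ i, N ≤ i → f i = 0) (p : ℕ) (hp : 0 < p) :
    ∃ a b, a ≤ b ∧ (∀ i, i < a → p < f i) ∧ (∀ i, a ≤ i → i < b → f i = p) ∧
      (∀ i, b ≤ i → f i < p) ∧ mult f p = b - a := by
  obtain ⟨N, hN⟩ := hz
  have hne1 : {i | f i < p}.Nonempty := ⟨N, by simp [hN N le_rfl, hp]⟩
  have hne2 : {i | f i ≤ p}.Nonempty := ⟨N, by simp [hN N le_rfl]⟩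
  set b := sInf {i | f i < p} with hb
  set a := sInf {i | f i ≤ p} with ha
  have hbmem : f b < p := Nat.sInf_mem hne1
  have hamem : f a ≤ p := Nat.sInf_mem hne2
  have hab : a ≤ b := Nat.sInf_le (le_of_lt hbmem)
  have hlta : ∀ i, i < a → p < f i := by
    intro i hi
    have := Nat.notMem_of_lt_sInf (s := {i | f i ≤ p}) hi
    simp at this; omega
  have hmid : ∀ i, a ≤ i → i < b → f i = p := by
    intro i h1 h2
    have h3 : f i ≤ p := le_trans (hf h1) hamem
    have h4 := Nat.notMem_of_lt_sInf (s := {i | f i < p}) h2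
    simp at h4; omega
  have hgeb : ∀ i, b ≤ i → f i < p := fun i hi => lt_of_le_of_lt (hf hi) hbmem
  refine ⟨a, b, hab, hlta, hmid, hgeb, ?_⟩
  have hset : {i | f i = p} = Set.Ico a b := by
    ext i
    simp only [Set.mem_setOf_eq, Set.mem_Ico]
    constructor
    · intro h
      constructor
      · by_contra hc; push_neg at hc; have := hlta i hc; omega
      · by_contra hc; push_neg at hc; have := hgeb i hc; omega
    · intro ⟨h1, h2⟩; exact hmid i h1 h2
  rw [mult, hset, ← Finset.coe_Ico, Set.ncard_coe_finset, Nat.card_Ico]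

lemma psum_block' {f : ℕ → ℕ} {a b p : ℕ} (hab : a ≤ b)
    (h : ∀ i, a ≤ i → i < b → f i = p) : psum f b = psum f a + (b - a) * p := by
  have key : ∀ m, a ≤ m → m ≤ b → psum f m = psum f a + (m - a) * p := by
    intro m hm
    induction m, hm using Nat.le_induction with
    | base => intro _; simp
    | succ m hm ih =>
      intro hmb
      have h1 : psum f m = psum f a + (m - a) * p := ih (by omega)
      have h2 : f m = p := h m hm (by omega)
      have h3 : (m + 1 - a) = (m - a) + 1 := by omega
      rw [psum_succ', h1, h2, h3, add_one_mul]; ring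
  exact key b hab le_rfl

/-- the multiplicity condition for type X; `ε = 0` for type C, `ε = 1` for types B/D. -/
def MultOK (ε : ℕ) (f : ℕ → ℕ) : Prop := ∀ p, 0 < p → (p + ε) % 2 = 1 → mult f p % 2 = 0

/-- parity of partial sums at corners. -/
def GoodC (ε : ℕ) (f : ℕ → ℕ) : Prop := ∀ k, f (k+1) < f k → (psum f (k+1) + ε * (k+1)) % 2 = 0

lemma goodC_of_multOK {ε : ℕ} {f : ℕ → ℕ} (hf : Antitone f) (hz : ∃ N, ∀ i, N ≤ i → f i = 0)
    (hm : MultOK ε f) : GoodC ε f := by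
  have main : ∀ c, 0 < c → f c < f (c-1) → (psum f c + ε * c) % 2 = 0 := by
    intro c
    induction c using Nat.strong_induction_on with
    | _ c ih =>
      intro hc hcorner
      set p := f (c-1) with hp
      have hp0 : 0 < p := by omega
      obtain ⟨a, b, hab, hlta, hmid, hgeb, hmult⟩ := block' hf hz p hp0
      have hc1 : c - 1 < b := by
        by_contra hcon; push_neg at hcon; have := hgeb _ hcon; omega
      have hc2 : a ≤ c - 1 := by
        by_contra hcon; push_neg at hcon; have := hlta _ hcon; omega
      have hbc : b = c := by
        have : ¬ (a ≤ c ∧ c < b) := by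
          intro ⟨h1, h2⟩; have := hmid c h1 h2; omega
        omega
      subst hbc
      have hsum : psum f b = psum f a + (b - a) * p := psum_block' (by omega) hmid
      have hpa : (psum f a + ε * a) % 2 = 0 := by
        rcases Nat.eq_zero_or_pos a with h | h
        · simp [h, psum]
        · have hcora : f a < f (a - 1) := by
            have h1 := hlta (a-1) (by omega)
            have h2 := hmid a le_rfl (by omega)
            omega
          exact ih a (by omega) h hcora
      have hprod : ((b - a) * p + ε * (b - a)) % 2 = 0 := by
        rcases Nat.even_or_odd (p + ε) with he | ho
        · rw [Nat.even_iff] at he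
          have h1 : (b - a) * p + ε * (b - a) = (b-a) * (p + ε) := by ring
          rw [h1, Nat.mul_mod, he]; simp
        · rw [Nat.odd_iff] at ho
          have h2 := hm p hp0 ho
          rw [hmult] at h2
          have h1 : (b - a) * p + ε * (b - a) = (b-a) * (p + ε) := by ring
          rw [h1, Nat.mul_mod, h2]; simp
      have hsplit : ε * b = ε * a + ε * (b - a) := by
        have hb : b = a + (b - a) := by omega
        calc ε * b = ε * (a + (b-a)) := by rw [← hb]
        _ = ε*a + ε*(b-a) := Nat.mul_add ε a (b-a)
      omega
  intro k hk
  have := main (k+1) (by omega) (by simpa using hk)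
  simpa using this

lemma multOK_of_goodC {ε : ℕ} {f : ℕ → ℕ} (hf : Antitone f) (hz : ∃ N, ∀ i, N ≤ i → f i = 0)
    (hg : GoodC ε f) : MultOK ε f := by
  intro p hp0 hpe
  obtain ⟨a, b, hab, hlta, hmid, hgeb, hmult⟩ := block' hf hz p hp0
  rcases Nat.eq_or_lt_of_le hab with h | h
  · rw [hmult, ← h]; simp
  · have hsum : psum f b = psum f a + (b - a) * p := psum_block' hab hmid
    have hcorb : f b < f (b - 1) := by
      have h1 := hmid (b-1) (by omega) (by omega)
      have h2 := hgeb b le_rfl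
      omega
    have hgb : (psum f b + ε * b) % 2 = 0 := by
      have := hg (b-1) (by rw [Nat.sub_add_cancel (by omega)]; exact hcorb)
      rw [Nat.sub_add_cancel (by omega)] at this
      exact this
    have hpa : (psum f a + ε * a) % 2 = 0 := by
      rcases Nat.eq_zero_or_pos a with h0 | h0
      · simp [h0, psum]
      · have hcora : f a < f (a - 1) := by
          have h1 := hlta (a-1) (by omega)
          have h2 := hmid a le_rfl h
          omega
        have := hg (a-1) (by rw [Nat.sub_add_cancel (by omega)]; exact hcora)
        rw [Nat.sub_add_cancel (by omega)] at this
        exact this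
    have hsplit : ε * b = ε * a + ε * (b - a) := by
      have hb : b = a + (b - a) := by omega
      calc ε * b = ε * (a + (b-a)) := by rw [← hb]
      _ = ε*a + ε*(b-a) := Nat.mul_add ε a (b-a)
    have hprod : ((b - a) * p + ε * (b - a)) % 2 = 0 := by omega
    have h1 : (b - a) * p + ε * (b - a) = (b-a) * (p + ε) := by ring
    rw [h1, Nat.mul_mod, hpe] at hprod
    rw [hmult]
    simpa using hprod

lemma main (ε : ℕ) (hε : ε ≤ 1) :
    ∀ w d, IsPartition d → (ε = 0 → size d % 2 = 0) →
      (∑ k ∈ Finset.range (size d + 1), psum d k) ≤ w →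
      ∃ c, IsPartition c ∧ size c = size d ∧ MultOK ε c ∧ (∀ k, psum c k ≤ psum d k) ∧
        ∀ e, IsPartition e → MultOK ε e → size e = size d → (∀ k, psum e k ≤ psum d k) →
          (∀ k, psum e k ≤ psum c k) := by
  intro w
  induction w using Nat.strong_induction_on with
  | _ w ih =>
  intro d hd h0 hW
  obtain ⟨hanti, hzero⟩ := hd
  by_cases hg : GoodC ε d
  · exact ⟨d, ⟨hanti, hzero⟩, rfl, multOK_of_goodC hanti hzero hg, fun k => le_rfl,
      fun e _ _ _ he => he⟩
  · have hbad : {k | d (k+1) < d k ∧ (psum d (k+1) + ε * (k+1)) % 2 = 1}.Nonempty := by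
      rw [GoodC] at hg; push_neg at hg
      obtain ⟨k, hk1, hk2⟩ := hg
      exact ⟨k, hk1, by omega⟩
    set q' := sInf {k | d (k+1) < d k ∧ (psum d (k+1) + ε * (k+1)) % 2 = 1} with hq'
    obtain ⟨hcq, hparq⟩ : d (q'+1) < d q' ∧ (psum d (q'+1) + ε * (q'+1)) % 2 = 1 :=
      Nat.sInf_mem hbad
    have hmin : ∀ k, k < q' → d (k+1) < d k → (psum d (k+1) + ε * (k+1)) % 2 = 0 := by
      intro k hk hc
      have hnm := Nat.notMem_of_lt_sInf (s := {k | d (k+1) < d k ∧ (psum d (k+1) + ε * (k+1)) % 2 = 1}) (by rw [← hq']; exact hk)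
      simp only [Set.mem_setOf_eq, not_and] at hnm
      have := hnm hc; omega
    set v := d q' with hv
    have hv0 : 0 < v := by omega
    obtain ⟨a, b, hab, hlta, hmid, hgeb, hmult⟩ := block' hanti hzero v hv0
    have ha1 : a ≤ q' := by
      by_contra hc; push_neg at hc; have := hlta q' hc; omega
    have hb1 : b = q' + 1 := by
      have h1 : q' < b := by
        by_contra hc; push_neg at hc; have := hgeb q' hc; omega
      have h2 : b ≤ q' + 1 := by
        by_contra hc; push_neg at hc; have := hmid (q'+1) (by omega) (by omega); omega
      omega
    have hsumq : psum d (q'+1) = psum d a + (q'+1-a) * v := by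
      rw [← hb1]; exact psum_block' hab hmid
    have hpa : (psum d a + ε * a) % 2 = 0 := by
      rcases Nat.eq_zero_or_pos a with h0a | h0a
      · simp [h0a, psum]
      · have hcora : d a < d (a-1) := by
          have h1 := hlta (a-1) (by omega)
          have h2 := hmid a le_rfl (by omega)
          omega
        have := hmin (a-1) (by omega) (by rw [Nat.sub_add_cancel h0a]; exact hcora)
        rw [Nat.sub_add_cancel h0a] at this; exact this
    have hsplit : ε * (q'+1) = ε * a + ε * (q'+1-a) := by
      have hb : q'+1 = a + (q'+1 - a) := by omega
      calc ε * (q'+1) = ε * (a + (q'+1-a)) := by rw [← hb]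
      _ = ε*a + ε*(q'+1-a) := Nat.mul_add ε a (q'+1-a)
    have hvpar : (v + ε) % 2 = 1 := by
      by_contra hc
      have hc2 : (v + ε) % 2 = 0 := by omega
      have h1 : (q'+1-a) * v + ε * (q'+1-a) = (q'+1-a) * (v+ε) := by ring
      have h2 : ((q'+1-a) * (v+ε)) % 2 = 0 := by rw [Nat.mul_mod, hc2]; simp
      omega
    have hv2 : 2 ≤ v := by
      have hcase : ε = 0 ∨ ε = 1 := by omega
      rcases hcase with h | h
      · subst h
        by_contra hc
        have hv1 : v = 1 := by omega
        have hz2 : ∀ i, q' + 1 ≤ i → d i = 0 := by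
          intro i hi
          have := hanti hi; omega
        have := size_eq_psum' hz2
        have := h0 rfl
        simp only [Nat.mul_zero, Nat.zero_mul] at hparq
        omega
      · subst h; omega
    obtain ⟨N, hN⟩ := hzero
    have hrne : {j | d j ≤ v - 2}.Nonempty := ⟨N, by simp [hN N le_rfl]⟩
    set r := sInf {j | d j ≤ v - 2} with hr
    have hrmem : d r ≤ v - 2 := Nat.sInf_mem hrne
    have hqr : q' + 1 ≤ r := by
      by_contra hc; push_neg at hc
      have : d q' ≤ d r := hanti (by omega)
      omega
    have hmidr : ∀ j, q' + 1 ≤ j → j < r → d j = v - 1 := by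
      intro j h1 h2
      have hge := Nat.notMem_of_lt_sInf (s := {j | d j ≤ v - 2}) (by rw [← hr]; exact h2)
      simp only [Set.mem_setOf_eq, not_le] at hge
      have hle : d j ≤ d (q'+1) := hanti h1
      omega
    set dd : ℕ → ℕ := fun i => if i = q' then v - 1 else if i = r then d r + 1 else d i with hdd
    have hvq : dd q' = v - 1 := by simp [hdd]
    have hvr : dd r = d r + 1 := by
      have hne : ¬ (r = q') := by omega
      simp [hdd, hne]
    have hvo : ∀ i, i ≠ q' → i ≠ r → dd i = d i := by
      intro i h1 h2; simp [hdd, h1, h2]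
    -- psum relations
    have hps1 : ∀ k, k ≤ q' → psum dd k = psum d k := by
      intro k hk
      unfold psum
      apply Finset.sum_congr rfl
      intro i hi
      simp only [Finset.mem_range] at hi
      exact hvo i (by omega) (by omega)
    have hps2 : ∀ k, q'+1 ≤ k → k ≤ r → psum dd k + 1 = psum d k := by
      intro k hk
      induction k, hk using Nat.le_induction with
      | base =>
        intro _
        rw [psum_succ', psum_succ', hps1 q' le_rfl, hvq]
        omega
      | succ k hk ihk =>
        intro hkr
        have h1 := ihk (by omega)
        rw [psum_succ', psum_succ', hvo k (by omega) (by omega)]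
        omega
    have hps3 : ∀ k, r < k → psum dd k = psum d k := by
      intro k hk
      induction k, hk using Nat.le_induction with
      | base =>
        rw [psum_succ', psum_succ', hvr]
        have := hps2 r hqr le_rfl
        omega
      | succ k hk ihk =>
        rw [psum_succ', psum_succ', hvo k (by omega) (by omega), ihk]
    have hddle : ∀ k, psum dd k ≤ psum d k := by
      intro k
      by_cases hk1 : k ≤ q'
      · rw [hps1 k hk1]
      · by_cases hk2 : k ≤ r
        · have := hps2 k (by omega) hk2; omega
        · rw [hps3 k (by omega)]
    -- dd is a partition
    have hddanti : Antitone dd := by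
      apply antitone_nat_of_succ_le
      intro i
      by_cases h1 : i + 1 = q'
      · rw [show i + 1 = q' from h1, hvq, hvo i (by omega) (by omega)]
        have : d q' ≤ d i := hanti (by omega)
        omega
      · by_cases h2 : i = q'
        · rw [h2, hvq]
          by_cases h3 : q' + 1 = r
          · rw [h3, hvr]; omega
          · rw [hvo (q'+1) (by omega) h3, hmidr (q'+1) le_rfl (by omega)]
        · by_cases h3 : i + 1 = r
          · rw [h3, hvr, hvo i h2 (by omega)]
            have := hmidr i (by omega) (by omega)
            omega
          · by_cases h4 : i = r
            · rw [h4, hvr, hvo (r+1) (by omega) (by omega)]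
              have := hanti (show r ≤ r+1 by omega)
              omega
            · rw [hvo (i+1) h1 h3, hvo i h2 h4]
              exact hanti (show i ≤ i+1 by omega)
    have hddz : ∀ i, max N (r+1) ≤ i → dd i = 0 := by
      intro i hi
      rw [hvo i (by omega) (by omega)]
      exact hN i (by omega)
    have hddP : IsPartition dd := ⟨hddanti, ⟨max N (r+1), hddz⟩⟩
    have hsz : size dd = size d := by
      rw [size_eq_psum' hddz, size_eq_psum' (N := max N (r+1)) (fun i hi => hN i (by omega)),
        hps3 _ (by omega)]
    have hq_le : q' + 1 ≤ psum d (q'+1) := by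
      have hall : ∀ i ∈ Finset.range (q'+1), 1 ≤ d i := by
        intro i hi
        simp only [Finset.mem_range] at hi
        have := hanti (show i ≤ q' by omega); omega
      calc q'+1 = ∑ _i ∈ Finset.range (q'+1), 1 := by simp
      _ ≤ psum d (q'+1) := Finset.sum_le_sum hall
    have hWlt : (∑ k ∈ Finset.range (size dd + 1), psum dd k)
        < (∑ k ∈ Finset.range (size d + 1), psum d k) := by
      rw [hsz]
      apply Finset.sum_lt_sum
      · intro k _; exact hddle k
      · refine ⟨q'+1, Finset.mem_range.2 ?_, ?_⟩
        · have := psum_le_size' ⟨N, hN⟩ (q'+1); omega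
        · have := hps2 (q'+1) le_rfl hqr; omega
    obtain ⟨c, hcP, hcsz, hcM, hcdom, hcgr⟩ :=
      ih (∑ k ∈ Finset.range (size dd + 1), psum dd k) (by omega) dd hddP
        (fun h => by rw [hsz]; exact h0 h) le_rfl
    -- parity of d's psums along [q'+1, r]
    have hDpar : ∀ k, q'+1 ≤ k → k ≤ r → (psum d k + ε * k) % 2 = 1 := by
      intro k hk
      induction k, hk using Nat.le_induction with
      | base => intro _; exact hparq
      | succ k hk ihk =>
        intro hkr
        have h1 := ihk (by omega)
        have h2 : d k = v - 1 := hmidr k hk (by omega)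
        rw [psum_succ', h2]
        have h3 : ε * (k+1) = ε * k + ε := by ring
        omega
    -- key: every type-X e dominated by d is dominated by dd
    have hkey : ∀ e, Antitone e → (∃ M, ∀ i, M ≤ i → e i = 0) → MultOK ε e →
        (∀ k, psum e k ≤ psum d k) → ∀ k, psum e k ≤ psum dd k := by
      intro e heA heZ heM hedom
      have heG : GoodC ε e := goodC_of_multOK heA heZ heM
      have hstrict : ∀ k, q'+1 ≤ k → k ≤ r → psum e k < psum d k := by
        intro k hk
        induction k, hk using Nat.le_induction with
        | base =>
          intro _
          by_contra hcon
          have heq : psum e (q'+1) = psum d (q'+1) := le_antisymm (hedom _) (by omega)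
          have hpse := psum_succ' e q'
          have hpsd := psum_succ' d q'
          have hpse2 := psum_succ' e (q'+1)
          have hpsd2 := psum_succ' d (q'+1)
          have hd1 := hedom q'
          have hd2 := hedom (q'+1+1)
          have hce : e (q'+1) < e q' := by omega
          have := heG q' hce
          omega
        | succ k hk ihk =>
          intro hkr
          have h1 : psum e k < psum d k := ihk (by omega)
          by_contra hcon
          have heq : psum e (k+1) = psum d (k+1) := le_antisymm (hedom _) (by omega)
          have hdk : d k = v - 1 := hmidr k hk (by omega)
          have hpse := psum_succ' e k
          have hpsd := psum_succ' d k
          have hpse2 := psum_succ' e (k+1)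
          have hpsd2 := psum_succ' d (k+1)
          have hd2 := hedom (k+1+1)
          have h4 : d (k+1) ≤ d (q'+1) := hanti (by omega)
          have hce : e (k+1) < e k := by omega
          have := heG k hce
          have := hDpar (k+1) (by omega) hkr
          omega
      intro k
      by_cases hk1 : k ≤ q'
      · rw [hps1 k hk1]; exact hedom k
      · by_cases hk2 : k ≤ r
        · have h1 := hstrict k (by omega) hk2
          have h2 := hps2 k (by omega) hk2
          omega
        · rw [hps3 k (by omega)]; exact hedom k
    refine ⟨c, hcP, hcsz.trans hsz, hcM, fun k => le_trans (hcdom k) (hddle k), ?_⟩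
    intro e heP heM hesz hedom
    exact hcgr e heP heM (by omega) (hkey e heP.1 heP.2 heM hedom)


lemma psum_ext' {f g : ℕ → ℕ} (h : ∀ k, psum f k = psum g k) : f = g := by
  funext i
  have h1 := h i
  have h2 := h (i+1)
  have h3 := psum_succ' f i
  have h4 := psum_succ' g i
  omega

lemma collapse_unique {T : (ℕ → ℕ) → Prop} {d c y : ℕ → ℕ}
    (hc : IsCollapse T d c) (hy : IsCollapse T d y) : y = c := by
  obtain ⟨hcT, hcD, hcG⟩ := hc
  obtain ⟨hyT, hyD, hyG⟩ := hy
  have h1 := hcG y hyT hyD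
  have h2 := hyG c hcT hcD
  exact psum_ext' (fun k => le_antisymm (h1.2 k) (h2.2 k))


/-- collapses exist and are unique: for every partition of even
size there is a unique greatest type-C (resp. type-D) partition of the same
size dominated by it, and for every partition of odd size there is a unique
greatest type-B partition of the same size dominated by it. -/
theorem stmt_18 :
    (∀ d : ℕ → ℕ, IsPartition d → Even (size d) → ∃! c, IsCollapse IsTypeC d c) ∧
    (∀ d : ℕ → ℕ, IsPartition d → Even (size d) → ∃! c, IsCollapse IsTypeD d c) ∧
    (∀ d : ℕ → ℕ, IsPartition d → Odd (size d) → ∃! c, IsCollapse IsTypeB d c) := by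
  refine ⟨?_, ?_, ?_⟩
  · -- type C
    intro d hd hev
    obtain ⟨c, hcP, hcsz, hcM, hcdom, hcgr⟩ :=
      main 0 (by omega) _ d hd (fun _ => Nat.even_iff.1 hev) le_rfl
    have hcT : IsTypeC c := by
      refine ⟨hcP, by rw [hcsz]; exact hev, fun p hp => ?_⟩
      rw [Nat.odd_iff] at hp
      rw [Nat.even_iff]
      exact hcM p (by omega) (by omega)
    have hcol : IsCollapse IsTypeC d c := by
      refine ⟨hcT, ⟨hcsz, hcdom⟩, fun e heT heD => ⟨heD.1.trans hcsz.symm, ?_⟩⟩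
      refine hcgr e heT.1 (fun p hp0 hpe => ?_) heD.1 heD.2
      have := heT.2.2 p (Nat.odd_iff.2 (by omega))
      rw [Nat.even_iff] at this
      exact this
    exact ⟨c, hcol, fun y hy => collapse_unique hcol hy⟩
  · -- type D
    intro d hd hev
    obtain ⟨c, hcP, hcsz, hcM, hcdom, hcgr⟩ :=
      main 1 (by omega) _ d hd (fun h => by simp at h) le_rfl
    have hcT : IsTypeD c := by
      refine ⟨hcP, by rw [hcsz]; exact hev, fun p hp0 hp => ?_⟩
      rw [Nat.even_iff] at hp
      rw [Nat.even_iff]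
      exact hcM p hp0 (by omega)
    have hcol : IsCollapse IsTypeD d c := by
      refine ⟨hcT, ⟨hcsz, hcdom⟩, fun e heT heD => ⟨heD.1.trans hcsz.symm, ?_⟩⟩
      refine hcgr e heT.1 (fun p hp0 hpe => ?_) heD.1 heD.2
      have := heT.2.2 p hp0 (Nat.even_iff.2 (by omega))
      rw [Nat.even_iff] at this
      exact this
    exact ⟨c, hcol, fun y hy => collapse_unique hcol hy⟩
  · -- type B
    intro d hd hodd
    obtain ⟨c, hcP, hcsz, hcM, hcdom, hcgr⟩ :=
      main 1 (by omega) _ d hd (fun h => by simp at h) le_rfl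
    have hcT : IsTypeB c := by
      refine ⟨hcP, by rw [hcsz]; exact hodd, fun p hp0 hp => ?_⟩
      rw [Nat.even_iff] at hp
      rw [Nat.even_iff]
      exact hcM p hp0 (by omega)
    have hcol : IsCollapse IsTypeB d c := by
      refine ⟨hcT, ⟨hcsz, hcdom⟩, fun e heT heD => ⟨heD.1.trans hcsz.symm, ?_⟩⟩
      refine hcgr e heT.1 (fun p hp0 hpe => ?_) heD.1 heD.2
      have := heT.2.2 p hp0 (Nat.even_iff.2 (by omega))
      rw [Nat.even_iff] at this
      exact this
    exact ⟨c, hcol, fun y hy => collapse_unique hcol hy⟩
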